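/- Assume additionally that the null p-values are super-uniform, i.e. P(p_i ≤ t) ≤ t for all t ∈ [0,1] and all i ∈ H_0. Then for any nondecreasing sequence of critical values τ = (τ_1, …, τ_m) ∈ [0,1]^m with τ_m < 1, the false discovery rate of the step-up procedure SU(τ) satisfies FDR(SU(τ)) ≤ max_{1 ≤ k ≤ m} ((m−k+1)/(1−τ_m)) · (τ_k/k). -/

import Mathlib

/-!
Leave-one-out argument. Let `K i` be the number of rejections of the step-up procedure once
`p i` is replaced by `0`. Then `p i` is rejected iff `p i ≤ τ (K i)`, and in that case exactly
`K i` hypotheses are rejected, so `FDP = ∑_{i ∈ H0} 1{p i ≤ τ (K i)} / K i`. As `K i` is a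
function of the other p-values, it is independent of `p i`; super-uniformity then bounds the
expectation of the `i`-th term by that of `τ (K i) / K i ≤ B (1 - τ m) / (m - K i + 1)`, where
`B` is the claimed bound, hence by `B` times the expectation of
`1{p i > τ m} / (m - K i + 1)`. Finally, if `p i > τ m` then at most `m - K i + 1` p-values
exceed `τ m`, so these last terms sum to at most `1` pointwise.
-/

open MeasureTheory ProbabilityTheory Finset

/-- Number of rejections of the step-up procedure with critical values `τ 1, …, τ m`
(convention `τ 0 = 0`): the largest `k ∈ {0, …, m}` such that at least `k` of the
p-values are `≤ τ k`. -/
noncomputable def numRejSU (m : ℕ) (τ : ℕ → ℝ) (q : Fin m → ℝ) : ℕ :=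
  sSup {k | k ≤ m ∧ k ≤ (univ.filter (fun j => q j ≤ τ k)).card}

/-- Rejection set of the step-up procedure. -/
noncomputable def rejSU (m : ℕ) (τ : ℕ → ℝ) (q : Fin m → ℝ) : Finset (Fin m) :=
  univ.filter (fun i => q i ≤ τ (numRejSU m τ q))

/-- False discovery proportion of a rejection set `R` w.r.t. the set of true nulls `H0`. -/
noncomputable def FDP (m : ℕ) (H0 R : Finset (Fin m)) : ℝ :=
  ((R ∩ H0).card : ℝ) / max (R.card : ℝ) 1

lemma FDP_eq_card_inter_div_card {m : ℕ} (H0 R : Finset (Fin m)) :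
    FDP m H0 R = ((R ∩ H0).card : ℝ) / R.card := by
  -- for `R = ∅` the right-hand side is `0 / 0 = 0`
  rcases R.eq_empty_or_nonempty with rfl | hR
  · simp [FDP]
  · rw [FDP, max_eq_left (by exact_mod_cast hR.card_pos)]

section StepUp

variable {m : ℕ} {τ : ℕ → ℝ} {q : Fin m → ℝ}

lemma numRejSU_le_and_le_card :
    numRejSU m τ q ≤ m ∧ numRejSU m τ q ≤ #{j | q j ≤ τ (numRejSU m τ q)} :=
  Nat.sSup_mem (s := {k | k ≤ m ∧ k ≤ #{j | q j ≤ τ k}}) ⟨0, Nat.zero_le _, Nat.zero_le _⟩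
    ⟨m, fun _ hk => hk.1⟩

lemma numRejSU_le : numRejSU m τ q ≤ m := numRejSU_le_and_le_card.1

lemma le_numRejSU {k : ℕ} (hkm : k ≤ m) (hk : k ≤ #{j | q j ≤ τ k}) : k ≤ numRejSU m τ q :=
  le_csSup (s := {k | k ≤ m ∧ k ≤ #{j | q j ≤ τ k}}) ⟨m, fun _ hk => hk.1⟩ ⟨hkm, hk⟩

lemma numRejSU_eq_findGreatest :
    numRejSU m τ q = Nat.findGreatest (fun k => k ≤ #{j | q j ≤ τ k}) m :=
  le_antisymm (Nat.le_findGreatest numRejSU_le numRejSU_le_and_le_card.2)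
    (le_numRejSU (Nat.findGreatest_le m)
      (Nat.findGreatest_spec (P := fun k => k ≤ #{j | q j ≤ τ k}) (Nat.zero_le m)
        (Nat.zero_le _)))

lemma card_filter_le_tau_numRejSU (hτmono : ∀ k l, k ≤ l → l ≤ m → τ k ≤ τ l) :
    #{j | q j ≤ τ (numRejSU m τ q)} = numRejSU m τ q := by
  set n := numRejSU m τ q
  refine le_antisymm ?_ numRejSU_le_and_le_card.2
  rcases (numRejSU_le : n ≤ m).eq_or_lt with hnm | hnm
  · exact (card_filter_le _ _).trans_eq (by simpa using hnm.symm)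
  · -- maximality of `n`: the level `n + 1` is not admissible
    have hmono : #{j | q j ≤ τ n} ≤ #{j | q j ≤ τ (n + 1)} :=
      card_le_card <| monotone_filter_right univ fun _ _ h =>
        h.trans (hτmono n (n + 1) n.le_succ hnm)
    have hmax : ¬ n + 1 ≤ #{j | q j ≤ τ (n + 1)} := fun h =>
      (le_numRejSU hnm h).not_gt n.lt_succ_self
    omega

lemma card_rejSU (hτmono : ∀ k l, k ≤ l → l ≤ m → τ k ≤ τ l) :
    (rejSU m τ q).card = numRejSU m τ q :=
  card_filter_le_tau_numRejSU hτmono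

lemma filter_update_zero_le_eq {i : Fin m} {t : ℝ} (ht : 0 ≤ t) (hi : q i ≤ t) :
    univ.filter (fun j => Function.update q i 0 j ≤ t) = univ.filter (fun j => q j ≤ t) := by
  refine filter_congr fun j _ => ?_
  rcases eq_or_ne j i with rfl | hj
  · simp [ht, hi]
  · simp [Function.update_of_ne hj]

lemma filter_le_subset_filter_update_zero_le {i : Fin m} {t : ℝ} (ht : 0 ≤ t) :
    univ.filter (fun j => q j ≤ t) ⊆ univ.filter (fun j => Function.update q i 0 j ≤ t) := by
  intro j
  rcases eq_or_ne j i with rfl | hj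
  · simp [ht]
  · simp [Function.update_of_ne hj]

lemma numRejSU_le_numRejSU_update_zero (hτ : ∀ k ≤ m, 0 ≤ τ k) (i : Fin m) :
    numRejSU m τ q ≤ numRejSU m τ (Function.update q i 0) :=
  le_numRejSU numRejSU_le <| numRejSU_le_and_le_card.2.trans <|
    card_le_card (filter_le_subset_filter_update_zero_le (hτ _ numRejSU_le))

lemma numRejSU_update_zero_le (hτ : ∀ k ≤ m, 0 ≤ τ k) {i : Fin m}
    (hi : q i ≤ τ (numRejSU m τ (Function.update q i 0))) :
    numRejSU m τ (Function.update q i 0) ≤ numRejSU m τ q := by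
  refine le_numRejSU numRejSU_le ?_
  rw [← filter_update_zero_le_eq (hτ _ numRejSU_le) hi]
  exact numRejSU_le_and_le_card.2

lemma numRejSU_update_zero_eq (hτmono : ∀ k l, k ≤ l → l ≤ m → τ k ≤ τ l)
    (hτ : ∀ k ≤ m, 0 ≤ τ k) {i : Fin m} (hi : q i ≤ τ (numRejSU m τ q)) :
    numRejSU m τ (Function.update q i 0) = numRejSU m τ q := by
  have hle := numRejSU_le_numRejSU_update_zero (q := q) hτ i
  exact le_antisymm (numRejSU_update_zero_le hτ (hi.trans (hτmono _ _ hle numRejSU_le))) hle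

lemma le_tau_numRejSU_update_zero_iff (hτmono : ∀ k l, k ≤ l → l ≤ m → τ k ≤ τ l)
    (hτ : ∀ k ≤ m, 0 ≤ τ k) {i : Fin m} :
    q i ≤ τ (numRejSU m τ (Function.update q i 0)) ↔ q i ≤ τ (numRejSU m τ q) := by
  refine ⟨fun hi => ?_, fun hi => (numRejSU_update_zero_eq hτmono hτ hi).symm ▸ hi⟩
  rwa [← le_antisymm (numRejSU_update_zero_le hτ hi) (numRejSU_le_numRejSU_update_zero hτ i)]

lemma one_le_numRejSU_update_zero (hm : 1 ≤ m) (hτ1 : 0 ≤ τ 1) (i : Fin m) :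
    1 ≤ numRejSU m τ (Function.update q i 0) :=
  le_numRejSU hm (card_pos.mpr ⟨i, by simp [hτ1]⟩)

lemma FDP_rejSU_eq_sum (hτmono : ∀ k l, k ≤ l → l ≤ m → τ k ≤ τ l)
    (hτ : ∀ k ≤ m, 0 ≤ τ k) (H0 : Finset (Fin m)) :
    FDP m H0 (rejSU m τ q) = ∑ i ∈ H0,
      if q i ≤ τ (numRejSU m τ (Function.update q i 0)) then
        ((numRejSU m τ (Function.update q i 0) : ℕ) : ℝ)⁻¹ else 0 := by
  have hinter : rejSU m τ q ∩ H0 = H0.filter fun i => q i ≤ τ (numRejSU m τ q) := by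
    ext i
    simp [rejSU, and_comm]
  rw [FDP_eq_card_inter_div_card, card_rejSU hτmono, hinter, card_filter, Nat.cast_sum, sum_div]
  refine sum_congr rfl fun i _ => ?_
  have hiff := le_tau_numRejSU_update_zero_iff hτmono hτ (q := q) (i := i)
  by_cases hi : q i ≤ τ (numRejSU m τ q)
  · rw [if_pos hi, if_pos (hiff.mpr hi), numRejSU_update_zero_eq hτmono hτ hi, Nat.cast_one,
      one_div]
  · rw [if_neg hi, if_neg (mt hiff.mp hi), Nat.cast_zero, zero_div]

lemma card_filter_lt_le (hτmono : ∀ k l, k ≤ l → l ≤ m → τ k ≤ τ l) {i : Fin m}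
    (hi : τ m < q i) :
    #{j | τ m < q j} ≤ m - numRejSU m τ (Function.update q i 0) + 1 := by
  set K := numRejSU m τ (Function.update q i 0)
  have hK : K ≤ m := numRejSU_le
  -- apart from `i`, a p-value above `τ m` is not counted at the level `K`
  have hdisj : Disjoint ((univ.filter fun j => τ m < q j).erase i)
      (univ.filter fun j => Function.update q i 0 j ≤ τ K) := by
    refine disjoint_left.mpr fun j hj hj' => ?_
    obtain ⟨hji, hj⟩ := mem_erase.mp hj
    simp only [mem_filter, mem_univ, true_and, Function.update_of_ne hji] at hj hj'
    exact (hj.trans_le hj').not_ge (hτmono K m hK le_rfl)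
  have hunion := (card_union_of_disjoint hdisj).symm.trans_le (card_le_univ _)
  rw [card_filter_le_tau_numRejSU hτmono, Fintype.card_fin,
    card_erase_of_mem (by simpa using hi)] at hunion
  have hpos : 0 < #{j | τ m < q j} := card_pos.mpr ⟨i, by simpa using hi⟩
  omega

lemma sum_ite_lt_inv_le_one (hτmono : ∀ k l, k ≤ l → l ≤ m → τ k ≤ τ l)
    (H0 : Finset (Fin m)) :
    ∑ i ∈ H0, (if τ m < q i then
      ((m - numRejSU m τ (Function.update q i 0) + 1 : ℕ) : ℝ)⁻¹ else 0) ≤ 1 := by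
  set N := #{j | τ m < q j}
  calc ∑ i ∈ H0, (if τ m < q i then
          ((m - numRejSU m τ (Function.update q i 0) + 1 : ℕ) : ℝ)⁻¹ else 0)
      ≤ ∑ i ∈ H0, if τ m < q i then (N : ℝ)⁻¹ else 0 := by
        refine sum_le_sum fun i _ => ?_
        split_ifs with hi
        · exact inv_anti₀ (by simpa [N] using card_pos.mpr ⟨i, by simpa using hi⟩)
            (by exact_mod_cast card_filter_lt_le hτmono hi)
        · rfl
    _ = #{i ∈ H0 | τ m < q i} * (N : ℝ)⁻¹ := by
        rw [← sum_filter, sum_const, nsmul_eq_mul]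
    _ ≤ 1 := mul_inv_le_one_of_le₀
        (by exact_mod_cast card_le_card (filter_subset_filter _ (subset_univ H0)))
        (Nat.cast_nonneg N)

end StepUp

lemma measurable_card_filter_le (m : ℕ) (t : ℝ) :
    Measurable fun q : Fin m → ℝ => #{j | q j ≤ t} := by
  simp_rw [card_filter]
  exact Finset.measurable_sum _ fun j _ =>
    Measurable.ite (measurableSet_le (measurable_pi_apply j) measurable_const)
      measurable_const measurable_const

lemma measurable_numRejSU (m : ℕ) (τ : ℕ → ℝ) : Measurable (numRejSU m τ) := by
  simp_rw [funext fun q => numRejSU_eq_findGreatest (m := m) (τ := τ) (q := q)]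
  exact measurable_findGreatest fun k _ =>
    measurable_card_filter_le m (τ k) (measurableSet_Ici (a := k))

section Probability

variable {Ω α : Type*} {X : Ω → α} {K : Ω → ℕ} {S : Finset ℕ}
  {c : ℕ → α → Prop} [∀ k, DecidablePred (c k)]

lemma ite_eq_sum_indicator (hKS : ∀ ω, K ω ∈ S) (a : ℕ → ℝ) (ω : Ω) :
    (if c (K ω) (X ω) then a (K ω) else 0)
      = ∑ k ∈ S, (K ⁻¹' {k} ∩ X ⁻¹' {x | c k x}).indicator (fun _ => a k) ω := by
  rw [sum_eq_single_of_mem (K ω) (hKS ω)]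
  · by_cases h : c (K ω) (X ω) <;> simp [h]
  · intro k _ hk
    exact Set.indicator_of_notMem (fun h => hk h.1.symm) _

variable [MeasurableSpace Ω] [MeasurableSpace α] {P : Measure Ω}

lemma integrable_ite [IsFiniteMeasure P] (hX : Measurable X) (hK : Measurable K)
    (hKS : ∀ ω, K ω ∈ S) (hc : ∀ k, MeasurableSet {x | c k x}) (a : ℕ → ℝ) :
    Integrable (fun ω => if c (K ω) (X ω) then a (K ω) else 0) P := by
  simp_rw [ite_eq_sum_indicator hKS a]
  exact integrable_finsetSum _ fun k _ =>
    (integrable_const _).indicator ((hK (measurableSet_singleton k)).inter (hX (hc k)))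

lemma ProbabilityTheory.IndepFun.integral_ite [IsFiniteMeasure P] (hXK : IndepFun X K P)
    (hX : Measurable X) (hK : Measurable K) (hKS : ∀ ω, K ω ∈ S)
    (hc : ∀ k, MeasurableSet {x | c k x}) (a : ℕ → ℝ) :
    ∫ ω, (if c (K ω) (X ω) then a (K ω) else 0) ∂P
      = ∑ k ∈ S, a k * P.real (X ⁻¹' {x | c k x}) * P.real (K ⁻¹' {k}) := by
  simp_rw [ite_eq_sum_indicator hKS a]
  rw [integral_finsetSum _ fun k _ => (integrable_const _).indicator
    ((hK (measurableSet_singleton k)).inter (hX (hc k)))]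
  refine sum_congr rfl fun k _ => ?_
  rw [integral_indicator_const _ ((hK (measurableSet_singleton k)).inter (hX (hc k))),
    smul_eq_mul, Set.inter_comm, measureReal_def,
    hXK.measure_inter_preimage_eq_mul _ _ (hc k) (measurableSet_singleton k),
    ENNReal.toReal_mul, measureReal_def, measureReal_def]
  ring

lemma ProbabilityTheory.iIndepFun.indepFun_comp_update {ι β γ : Type*} [Fintype ι]
    [DecidableEq ι] [MeasurableSpace β] [MeasurableSpace γ] {f : ι → Ω → β} (hf : iIndepFun f P)
    (hmeas : ∀ i, Measurable (f i)) (i : ι) (c : β) {g : (ι → β) → γ} (hg : Measurable g) :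
    IndepFun (f i) (fun ω => g (Function.update (fun j => f j ω) i c)) P := by
  let extend : (({i}ᶜ : Finset ι) → β) → ι → β := fun v j =>
    if hj : j = i then c else v ⟨j, by simpa using hj⟩
  have hextend : Measurable extend := measurable_pi_lambda _ fun j => by
    by_cases hj : j = i
    · simp [extend, hj]
    · simpa [extend, hj] using measurable_pi_apply (X := fun _ : ({i}ᶜ : Finset ι) => β)
        ⟨j, by simpa using hj⟩
  have hupdate : (fun ω => g (Function.update (fun j => f j ω) i c))
      = (g ∘ extend) ∘ fun ω (j : ({i}ᶜ : Finset ι)) => f j ω := by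
    refine funext fun ω => congrArg g (funext fun j => ?_)
    by_cases hj : j = i <;> simp [extend, hj]
  rw [hupdate]
  exact (hf.indepFun_finset {i} {i}ᶜ disjoint_compl_right hmeas).comp
    (measurable_pi_apply ⟨i, mem_singleton_self i⟩) (hg.comp hextend)

end Probability

lemma integral_ite_le_tau_le_mul_integral_ite_lt {Ω : Type*} [MeasurableSpace Ω]
    {P : Measure Ω} [IsProbabilityMeasure P] {m : ℕ} {τ : ℕ → ℝ} {X : Ω → ℝ} {K : Ω → ℕ}
    (hXK : IndepFun X K P) (hX : Measurable X) (hK : Measurable K) (hKm : ∀ ω, K ω ∈ Icc 1 m)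
    (hsu : ∀ t ∈ Set.Icc (0 : ℝ) 1, P {ω | X ω ≤ t} ≤ ENNReal.ofReal t)
    (hτ01 : ∀ k ≤ m, τ k ∈ Set.Icc (0 : ℝ) 1) (hτm : τ m < 1) {B : ℝ}
    (hB : ∀ k ∈ Icc 1 m, ((m - k + 1 : ℕ) : ℝ) / (1 - τ m) * (τ k / k) ≤ B) :
    ∫ ω, (if X ω ≤ τ (K ω) then ((K ω : ℕ) : ℝ)⁻¹ else 0) ∂P
      ≤ B * ∫ ω, (if τ m < X ω then ((m - K ω + 1 : ℕ) : ℝ)⁻¹ else 0) ∂P := by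
  have hle : ∀ k ≤ m, P.real (X ⁻¹' {x | x ≤ τ k}) ≤ τ k := fun k hk =>
    ENNReal.toReal_le_of_le_ofReal (hτ01 k hk).1 (hsu _ (hτ01 k hk))
  have hgt : 1 - τ m ≤ P.real (X ⁻¹' {x | τ m < x}) := by
    have hcompl : X ⁻¹' {x | τ m < x} = (X ⁻¹' {x | x ≤ τ m})ᶜ := by ext; simp
    rw [hcompl, probReal_compl_eq_one_sub (s := X ⁻¹' {x | x ≤ τ m}) (hX measurableSet_Iic)]
    linarith [hle m le_rfl]
  rw [hXK.integral_ite (c := fun k x => x ≤ τ k) hX hK hKm (fun _ => measurableSet_Iic)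
      fun k => ((k : ℕ) : ℝ)⁻¹,
    hXK.integral_ite (c := fun _ x => τ m < x) hX hK hKm (fun _ => measurableSet_Ioi)
      fun k => ((m - k + 1 : ℕ) : ℝ)⁻¹, mul_sum]
  refine sum_le_sum fun k hk => ?_
  have hkm := (mem_Icc.mp hk).2
  have hτm' : 0 < 1 - τ m := by linarith
  have hB0 : 0 ≤ B := le_trans (by have := (hτ01 k hkm).1; positivity) (hB k hk)
  -- the weight `1/k` of a rejection at level `k` is paid for by the weight `1/(m-k+1)` of a
  -- p-value above `τ m`, which has probability at least `1 - τ m`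
  have hweight : (k : ℝ)⁻¹ * P.real (X ⁻¹' {x | x ≤ τ k})
      ≤ B * (((m - k + 1 : ℕ) : ℝ)⁻¹ * P.real (X ⁻¹' {x | τ m < x})) := calc
    (k : ℝ)⁻¹ * P.real (X ⁻¹' {x | x ≤ τ k}) ≤ τ k / k := by
      rw [inv_mul_eq_div]
      gcongr
      exact hle k hkm
    _ = (1 - τ m) / ((m - k + 1 : ℕ) : ℝ)
          * (((m - k + 1 : ℕ) : ℝ) / (1 - τ m) * (τ k / k)) := by
      field_simp
    _ ≤ (1 - τ m) / ((m - k + 1 : ℕ) : ℝ) * B := by gcongr; exact hB k hk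
    _ ≤ P.real (X ⁻¹' {x | τ m < x}) / ((m - k + 1 : ℕ) : ℝ) * B := by gcongr
    _ = B * (((m - k + 1 : ℕ) : ℝ)⁻¹ * P.real (X ⁻¹' {x | τ m < x})) := by ring
  calc (k : ℝ)⁻¹ * P.real (X ⁻¹' {x | x ≤ τ k}) * P.real (K ⁻¹' {k})
      ≤ B * (((m - k + 1 : ℕ) : ℝ)⁻¹ * P.real (X ⁻¹' {x | τ m < x})) * P.real (K ⁻¹' {k}) :=
        mul_le_mul_of_nonneg_right hweight measureReal_nonneg
    _ = _ := by ring

theorem fdr_su_superuniform_adaptive_bound_general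
    {Ω : Type*} [MeasurableSpace Ω] (P : Measure Ω) [IsProbabilityMeasure P]
    (m : ℕ) (hm : 1 ≤ m)
    (p : Fin m → Ω → ℝ) (hmeas : ∀ i, Measurable (p i))
    (hindep : iIndepFun p P)
    (H0 : Finset (Fin m))
    (hnull : ∀ i ∈ H0, ∀ t ∈ Set.Icc (0 : ℝ) 1,
      P {ω | p i ω ≤ t} ≤ ENNReal.ofReal t)
    (τ : ℕ → ℝ)
    (hτmono : ∀ k l, k ≤ l → l ≤ m → τ k ≤ τ l)
    (hτ01 : ∀ k ≤ m, τ k ∈ Set.Icc (0 : ℝ) 1)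
    (hτm : τ m < 1) :
    ∫ ω, FDP m H0 (rejSU m τ (fun j => p j ω)) ∂P
      ≤ (Finset.Icc 1 m).sup' (Finset.nonempty_Icc.mpr hm)
          (fun k => ((m - k + 1 : ℕ) : ℝ) / (1 - τ m) * (τ k / (k : ℝ))) := by
  set f : ℕ → ℝ := fun k => ((m - k + 1 : ℕ) : ℝ) / (1 - τ m) * (τ k / (k : ℝ))
  set B := (Finset.Icc 1 m).sup' (Finset.nonempty_Icc.mpr hm) f
  have hτ : ∀ k ≤ m, 0 ≤ τ k := fun k hk => (hτ01 k hk).1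
  set K : Fin m → Ω → ℕ := fun i ω => numRejSU m τ (Function.update (fun j => p j ω) i 0)
  have hK : ∀ i, Measurable (K i) := fun i =>
    (measurable_numRejSU m τ).comp (measurable_update_left.comp (measurable_pi_lambda _ hmeas))
  have hKm : ∀ i ω, K i ω ∈ Icc 1 m := fun i ω =>
    mem_Icc.mpr ⟨one_le_numRejSU_update_zero hm (hτ 1 hm) i, numRejSU_le⟩
  have hpK : ∀ i, IndepFun (p i) (K i) P := fun i =>
    hindep.indepFun_comp_update hmeas i 0 (measurable_numRejSU m τ)
  have hB0 : 0 ≤ B := le_trans (by have := hτ 1 hm; positivity) (le_sup' f (left_mem_Icc.mpr hm))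
  have hint : ∀ i, Integrable
      (fun ω => if τ m < p i ω then ((m - K i ω + 1 : ℕ) : ℝ)⁻¹ else 0) P := fun i =>
    integrable_ite (c := fun _ x => τ m < x) (hmeas i) (hK i) (hKm i)
      (fun _ => measurableSet_Ioi) fun k => ((m - k + 1 : ℕ) : ℝ)⁻¹
  calc ∫ ω, FDP m H0 (rejSU m τ (fun j => p j ω)) ∂P
      = ∑ i ∈ H0, ∫ ω, (if p i ω ≤ τ (K i ω) then ((K i ω : ℕ) : ℝ)⁻¹ else 0) ∂P := by
        simp_rw [FDP_rejSU_eq_sum hτmono hτ]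
        exact integral_finsetSum _ fun i _ =>
          integrable_ite (c := fun k x => x ≤ τ k) (hmeas i) (hK i) (hKm i)
            (fun _ => measurableSet_Iic) fun k => ((k : ℕ) : ℝ)⁻¹
    _ ≤ ∑ i ∈ H0, B * ∫ ω, (if τ m < p i ω then ((m - K i ω + 1 : ℕ) : ℝ)⁻¹ else 0) ∂P :=
        sum_le_sum fun i hi => integral_ite_le_tau_le_mul_integral_ite_lt (hpK i) (hmeas i)
          (hK i) (hKm i) (hnull i hi) hτ01 hτm fun k hk => le_sup' f hk
    _ = B * ∫ ω, ∑ i ∈ H0, (if τ m < p i ω then ((m - K i ω + 1 : ℕ) : ℝ)⁻¹ else 0) ∂P := by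
        rw [← mul_sum, integral_finsetSum _ fun i _ => hint i]
    _ ≤ B * ∫ _, (1 : ℝ) ∂P := by
        gcongr
        · exact integrable_finsetSum _ fun i _ => hint i
        · exact integrable_const 1
        · exact fun ω => sum_ite_lt_inv_le_one hτmono H0
    _ = B := by simp

/-- under super-uniform null p-values and `τ_m < 1`,
`FDR(SU(τ)) ≤ max_{1 ≤ k ≤ m} ((m-k+1)/(1-τ_m)) · (τ_k/k)`. -/
theorem fdr_su_superuniform_adaptive_bound
    {Ω : Type*} [MeasurableSpace Ω] (P : Measure Ω) [IsProbabilityMeasure P]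
    (m : ℕ) (hm : 1 ≤ m)
    (p : Fin m → Ω → ℝ) (hmeas : ∀ i, Measurable (p i))
    (hp01 : ∀ i ω, p i ω ∈ Set.Icc (0 : ℝ) 1)
    (hindep : iIndepFun p P)
    (H0 : Finset (Fin m))
    (hnull : ∀ i ∈ H0, ∀ t ∈ Set.Icc (0 : ℝ) 1,
      P {ω | p i ω ≤ t} ≤ ENNReal.ofReal t)
    (τ : ℕ → ℝ) (hτ0 : τ 0 = 0)
    (hτmono : ∀ k l, k ≤ l → l ≤ m → τ k ≤ τ l)
    (hτ01 : ∀ k ≤ m, τ k ∈ Set.Icc (0 : ℝ) 1)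
    (hτm : τ m < 1) :
    ∫ ω, FDP m H0 (rejSU m τ (fun j => p j ω)) ∂P
      ≤ (Finset.Icc 1 m).sup' (Finset.nonempty_Icc.mpr hm)
          (fun k => ((m - k + 1 : ℕ) : ℝ) / (1 - τ m) * (τ k / (k : ℝ))) :=
  fdr_su_superuniform_adaptive_bound_general P m hm p hmeas hindep H0 hnull τ hτmono hτ01 hτm
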